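/- arXiv:0912.2027 — 8 statements merged into one kernel-verified Lean document; each statement's English description precedes it below -/
import Mathlib

section
/- Let f : ℝ → ℝ be continuous and let F : ℝ × ℝ → ℝ be a numerical flux consistent with f (i.e. F(v,v) = f(v) for all v) and monotone (nondecreasing in its first argument and nonincreasing in its second argument). Then for any v₁, v₂ ∈ ℝ and any smooth convex function η : ℝ → ℝ, the viscosity ∫_{v₁}^{v₂} η''(v) (f(v) − F(v₁,v₂)) dv is nonnegative. -/
open Set

/- On `[v₁, v₂]` monotonicity gives `F v₁ v₂ ≤ F v v₂ ≤ F v v = f v`, so the integrand is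
nonnegative; on a reversed interval the same chain runs the other way, the integrand is
nonpositive and the orientation of the signed integral restores the sign. -/

section Flux

variable {α β : Type*} [Preorder α] [Preorder β] {F : α → α → β}

theorem flux_le_flux_diag_of_mem_Icc (hmono₁ : ∀ w, Monotone (fun v => F v w))
    (hmono₂ : ∀ v, Antitone (fun w => F v w)) {v₁ v₂ v : α} (hv : v ∈ Icc v₁ v₂) :
    F v₁ v₂ ≤ F v v :=
  (hmono₁ v₂ hv.1).trans (hmono₂ v hv.2)

theorem flux_diag_le_flux_of_mem_Icc (hmono₁ : ∀ w, Monotone (fun v => F v w))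
    (hmono₂ : ∀ v, Antitone (fun w => F v w)) {v₁ v₂ v : α} (hv : v ∈ Icc v₂ v₁) :
    F v v ≤ F v₁ v₂ :=
  (hmono₂ v hv.1).trans (hmono₁ v₂ hv.2)

end Flux

theorem intervalIntegral.integral_nonneg_of_signed {g : ℝ → ℝ} {a b : ℝ}
    (hab : a ≤ b → ∀ x ∈ Icc a b, 0 ≤ g x) (hba : b ≤ a → ∀ x ∈ Icc b a, g x ≤ 0) :
    0 ≤ ∫ x in a..b, g x := by
  rcases le_total a b with h | h
  · exact intervalIntegral.integral_nonneg h (hab h)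
  · rw [intervalIntegral.integral_symm, ← intervalIntegral.integral_neg]
    exact intervalIntegral.integral_nonneg h fun x hx => neg_nonneg.mpr (hba h x hx)

theorem viscosity_nonneg_general (f : ℝ → ℝ) (F : ℝ → ℝ → ℝ) (η : ℝ → ℝ)
    (hcons : ∀ v, F v v = f v)
    (hmono₁ : ∀ w, Monotone (fun v => F v w))
    (hmono₂ : ∀ v, Antitone (fun w => F v w))
    (hconv : ∀ v, 0 ≤ iteratedDeriv 2 η v)
    (v₁ v₂ : ℝ) :
    0 ≤ ∫ v in v₁..v₂, iteratedDeriv 2 η v * (f v - F v₁ v₂) := by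
  apply intervalIntegral.integral_nonneg_of_signed
  · intro _ v hv
    have hflux := flux_le_flux_diag_of_mem_Icc hmono₁ hmono₂ hv
    rw [hcons] at hflux
    exact mul_nonneg (hconv v) (sub_nonneg.mpr hflux)
  · intro _ v hv
    have hflux := flux_diag_le_flux_of_mem_Icc hmono₁ hmono₂ hv
    rw [hcons] at hflux
    exact mul_nonpos_of_nonneg_of_nonpos (hconv v) (sub_nonpos.mpr hflux)

/-- Nonnegativity of the numerical viscosity of a monotone, consistent numerical flux:
for any smooth convex `η`, the signed integral `∫_{v₁}^{v₂} η''(v) (f(v) − F(v₁,v₂)) dv`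
is nonnegative. -/
theorem viscosity_nonneg (f : ℝ → ℝ) (F : ℝ → ℝ → ℝ) (η : ℝ → ℝ)
    (hf : Continuous f)
    (hcons : ∀ v, F v v = f v)
    (hmono₁ : ∀ w, Monotone (fun v => F v w))
    (hmono₂ : ∀ v, Antitone (fun w => F v w))
    (hη : ContDiff ℝ 2 η)
    (hconv : ∀ v, 0 ≤ iteratedDeriv 2 η v)
    (v₁ v₂ : ℝ) :
    0 ≤ ∫ v in v₁..v₂, iteratedDeriv 2 η v * (f v - F v₁ v₂) :=
  viscosity_nonneg_general f F η hcons hmono₁ hmono₂ hconv v₁ v₂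
end

section
/- Let b : ℝ → ℝ be monotone (nondecreasing) and Lipschitz continuous with Lipschitz constant L. Then for all p, q ∈ ℝ, (b(p) − b(q))² ≤ 2L · |∫_p^q (b(s) − b(p)) ds|. -/
/-!
Assume `p ≤ q` (the other case follows by reflecting `b` to `s ↦ -b (-s)`) and put
`c = b q - b p ≥ 0`, `δ = c / L ≤ q - p`. Monotonicity makes the integrand nonnegative on
`[p, q - δ]`, and the Lipschitz bound keeps `b s - b p` above the ramp `L (s - (q - δ))` on
`[q - δ, q]`; the ramp has integral `L δ² / 2 = c² / (2 L)`.
-/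

open intervalIntegral

section

variable {b : ℝ → ℝ} {L : ℝ}

theorem mul_sq_div_two_le_integral_sub (hmono : Monotone b)
    (hlip : ∀ x y, x ≤ y → b y - b x ≤ L * (y - x)) {p q δ : ℝ} (hδ : 0 ≤ δ)
    (hδq : δ ≤ q - p) (hLδ : L * δ ≤ b q - b p) :
    L * δ ^ 2 / 2 ≤ ∫ s in p..q, (b s - b p) := by
  have hint : ∀ u v, IntervalIntegrable (fun s => b s - b p) MeasureTheory.volume u v :=
    fun u v => hmono.intervalIntegrable.sub intervalIntegrable_const
  have hhead : 0 ≤ ∫ s in p..(q - δ), (b s - b p) :=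
    integral_nonneg (by linarith) fun s hs => sub_nonneg.2 (hmono hs.1)
  have htail : ∫ s in (q - δ)..q, L * (s - (q - δ)) ≤ ∫ s in (q - δ)..q, (b s - b p) := by
    refine integral_mono_on (by linarith) (Continuous.intervalIntegrable (by fun_prop) _ _)
      (hint _ _) fun s hs => ?_
    linarith [hlip s q hs.2]
  have hramp : ∫ s in (q - δ)..q, L * (s - (q - δ)) = L * δ ^ 2 / 2 := by
    rw [integral_comp_sub_right (fun s => L * s), integral_const_mul, integral_id]
    ring
  rw [← integral_add_adjacent_intervals (hint p (q - δ)) (hint (q - δ) q)]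
  linarith

theorem sq_sub_le_two_mul_integral_sub_left (hL : 0 ≤ L) (hmono : Monotone b)
    (hlip : ∀ x y, x ≤ y → b y - b x ≤ L * (y - x)) {p q : ℝ} (hpq : p ≤ q) :
    (b q - b p) ^ 2 ≤ 2 * L * ∫ s in p..q, (b s - b p) := by
  have hc : 0 ≤ b q - b p := sub_nonneg.2 (hmono hpq)
  have hcL : b q - b p ≤ L * (q - p) := hlip p q hpq
  obtain ⟨δ, hδ, hδq, hLδ⟩ : ∃ δ, 0 ≤ δ ∧ δ ≤ q - p ∧ L * δ = b q - b p := by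
    rcases hL.eq_or_lt with rfl | hL
    · exact ⟨0, le_rfl, by linarith, by linarith⟩
    · exact ⟨(b q - b p) / L, by positivity, (div_le_iff₀' hL).2 hcL, by field_simp⟩
  calc (b q - b p) ^ 2 = 2 * L * (L * δ ^ 2 / 2) := by rw [← hLδ]; ring
    _ ≤ _ := by gcongr; exact mul_sq_div_two_le_integral_sub hmono hlip hδ hδq hLδ.le

theorem sq_sub_le_two_mul_integral_sub_right (hL : 0 ≤ L) (hmono : Monotone b)
    (hlip : ∀ x y, x ≤ y → b y - b x ≤ L * (y - x)) {p q : ℝ} (hpq : p ≤ q) :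
    (b q - b p) ^ 2 ≤ 2 * L * ∫ s in p..q, (b q - b s) := by
  have hmono' : Monotone fun x => -b (-x) := fun x y hxy => neg_le_neg (hmono (neg_le_neg hxy))
  have hlip' : ∀ x y, x ≤ y → -b (-y) - -b (-x) ≤ L * (y - x) := fun x y hxy => by
    linarith [hlip (-y) (-x) (neg_le_neg hxy)]
  have h := sq_sub_le_two_mul_integral_sub_left hL hmono' hlip' (neg_le_neg hpq)
  simp only [neg_neg, sub_neg_eq_add] at h
  calc (b q - b p) ^ 2 = (-b p + b q) ^ 2 := by ring
    _ ≤ 2 * L * ∫ s in -q..-p, (-b (-s) + b q) := h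
    _ = 2 * L * ∫ s in -q..-p, (b q - b (-s)) := by simp only [neg_add_eq_sub]
    _ = 2 * L * ∫ s in p..q, (b q - b s) := by
      rw [integral_comp_neg (fun s => b q - b s), neg_neg, neg_neg]

theorem sq_sub_le_two_mul_integral (hL : 0 ≤ L) (hmono : Monotone b)
    (hlip : ∀ x y, x ≤ y → b y - b x ≤ L * (y - x)) (p q : ℝ) :
    (b p - b q) ^ 2 ≤ 2 * L * ∫ s in p..q, (b s - b p) := by
  rcases le_total p q with hpq | hqp
  · rw [← neg_sub, neg_sq]
    exact sq_sub_le_two_mul_integral_sub_left hL hmono hlip hpq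
  · rw [integral_symm, ← integral_neg]
    simpa only [neg_sub] using sq_sub_le_two_mul_integral_sub_right hL hmono hlip hqp

end

/-- Technical lemma (cf. Eymard–Gallouët–Herbin, Lemma 4.5): for a nondecreasing,
`L`-Lipschitz function `b`, `(b p − b q)² ≤ 2 L |∫_p^q (b s − b p) ds|`. -/
theorem monotone_lipschitz_sq_le (b : ℝ → ℝ) (L : ℝ) (hL : 0 ≤ L)
    (hmono : Monotone b)
    (hlip : ∀ x y, |b x - b y| ≤ L * |x - y|)
    (p q : ℝ) :
    (b p - b q) ^ 2 ≤ 2 * L * |∫ s in p..q, (b s - b p)| := by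
  have hlip' : ∀ x y, x ≤ y → b y - b x ≤ L * (y - x) := fun x y hxy => by
    simpa only [abs_of_nonneg (sub_nonneg.2 (hmono hxy)), abs_of_nonneg (sub_nonneg.2 hxy)]
      using hlip y x
  calc (b p - b q) ^ 2 ≤ 2 * L * ∫ s in p..q, (b s - b p) :=
        sq_sub_le_two_mul_integral hL hmono hlip' p q
    _ ≤ 2 * L * |∫ s in p..q, (b s - b p)| := by gcongr; exact le_abs_self _
end

section
/- Let f : ℝ → ℝ be Lipschitz and F : ℝ × ℝ → ℝ be a Lipschitz, monotone numerical flux consistent with f (F nondecreasing in the first variable, nonincreasing in the second, F(v,v) = f(v)). Then there exists a constant C > 0 depending only on the Lipschitz constant of F such that for all p, q ∈ ℝ, (f(p) − F(p,q))² ≤ C ∫_p^q (f(s) − F(p,q)) ds, where the right-hand side signed integral is nonnegative. -/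
/-!
On the diagonal `f s = F s s`. For `p ≤ s ≤ q` monotonicity gives `F p q ≤ F p s ≤ F s s`, so the
integrand `f s - F p q` is nonnegative, and the Lipschitz bound in the second variable together
with monotonicity in the first gives `F s s ≥ F p p - L (s - p)`, so the integrand lies above the
ramp `a - L (s - p)` with `a = f p - F p q ≥ 0`. The integral therefore dominates the area
`a² / (2L)` of the triangle under the ramp. The slope is taken to be `L = LF + 1` so that it stays
positive when `LF = 0`. The case `q ≤ p` is the mirror image.
-/

open Set intervalIntegral

theorem integral_ramp (p a L : ℝ) (hL : L ≠ 0) :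
    ∫ s in p..p + a / L, (a - L * (s - p)) = a ^ 2 / (2 * L) := by
  rw [integral_comp_sub_right (fun u => a - L * u), add_sub_cancel_left, sub_self,
    integral_sub intervalIntegrable_const (intervalIntegrable_id.const_mul L),
    intervalIntegral.integral_const_mul, integral_id, integral_const]
  simp only [smul_eq_mul]
  field_simp
  ring

theorem sq_div_le_integral_of_ramp_left_le {g : ℝ → ℝ} {p q a L : ℝ} (hpq : p ≤ q) (hL : 0 < L)
    (ha : 0 ≤ a) (haL : a ≤ L * (q - p)) (hg : IntervalIntegrable g MeasureTheory.volume p q)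
    (hg_nonneg : ∀ s ∈ Icc p q, 0 ≤ g s) (hg_ramp : ∀ s ∈ Icc p q, a - L * (s - p) ≤ g s) :
    a ^ 2 / (2 * L) ≤ ∫ s in p..q, g s := by
  set m := p + a / L
  have hpm : p ≤ m := le_add_of_nonneg_right (div_nonneg ha hL.le)
  have hmq : m ≤ q := by
    have : a / L ≤ q - p := (div_le_iff₀' hL).mpr haL
    linarith
  have hg_pm : IntervalIntegrable g MeasureTheory.volume p m :=
    hg.mono_set (uIcc_subset_uIcc_left (by simp [uIcc_of_le hpq, hpm, hmq]))
  have hg_mq : IntervalIntegrable g MeasureTheory.volume m q :=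
    hg.mono_set (uIcc_subset_uIcc_right (by simp [uIcc_of_le hpq, hpm, hmq]))
  calc a ^ 2 / (2 * L) = ∫ s in p..m, (a - L * (s - p)) := (integral_ramp p a L hL.ne').symm
    _ ≤ ∫ s in p..m, g s :=
        integral_mono_on hpm (Continuous.intervalIntegrable (by fun_prop) _ _) hg_pm
          fun s hs => hg_ramp s ⟨hs.1, hs.2.trans hmq⟩
    _ ≤ (∫ s in p..m, g s) + ∫ s in m..q, g s :=
        le_add_of_nonneg_right (integral_nonneg hmq fun s hs => hg_nonneg s ⟨hpm.trans hs.1, hs.2⟩)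
    _ = ∫ s in p..q, g s := integral_add_adjacent_intervals hg_pm hg_mq

theorem sq_div_le_integral_of_ramp_right_le {g : ℝ → ℝ} {p q a L : ℝ} (hqp : q ≤ p) (hL : 0 < L)
    (ha : 0 ≤ a) (haL : a ≤ L * (p - q)) (hg : IntervalIntegrable g MeasureTheory.volume q p)
    (hg_nonneg : ∀ s ∈ Icc q p, 0 ≤ g s) (hg_ramp : ∀ s ∈ Icc q p, a - L * (p - s) ≤ g s) :
    a ^ 2 / (2 * L) ≤ ∫ s in q..p, g s := by
  have hneg : ∀ s ∈ Icc (-p) (-q), -s ∈ Icc q p :=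
    fun s hs => ⟨le_neg_of_le_neg hs.2, neg_le_of_neg_le hs.1⟩
  have h := sq_div_le_integral_of_ramp_left_le (g := fun s => g (-s)) (neg_le_neg hqp) hL ha
    (by linarith) ((IntervalIntegrable.iff_comp_neg).mp hg.symm)
    (fun s hs => hg_nonneg (-s) (hneg s hs))
    (fun s hs => by simpa [sub_eq_add_neg, add_comm] using hg_ramp (-s) (hneg s hs))
  simpa [integral_comp_neg] using h

namespace NumericalFlux

variable {F : ℝ → ℝ → ℝ} {K : ℝ}
  (hF : ∀ p q p' q', |F p q - F p' q'| ≤ K * (|p - p'| + |q - q'|))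
  (hmono₁ : ∀ w, Monotone (fun v => F v w)) (hmono₂ : ∀ v, Antitone (fun w => F v w))
include hF

theorem lipschitz_const_nonneg : 0 ≤ K := by
  simpa using (abs_nonneg _).trans (hF 1 0 0 0)

theorem continuous_diag : Continuous fun v => F v v := by
  refine (LipschitzWith.of_dist_le_mul (K := (2 * K).toNNReal) fun x y => ?_).continuous
  rw [Real.dist_eq, Real.dist_eq]
  calc |F x x - F y y| ≤ 2 * K * |x - y| := by linarith [hF x x y y]
    _ ≤ _ := mul_le_mul_of_nonneg_right (Real.le_coe_toNNReal _) (abs_nonneg _)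

theorem sub_le_mul_abs_sub_right (p q q' : ℝ) : F p q - F p q' ≤ K * |q - q'| := by
  simpa using (le_abs_self _).trans (hF p q p q')

include hmono₁

theorem sub_mul_le_diag {p s : ℝ} (hps : p ≤ s) : F p p - K * (s - p) ≤ F s s := by
  have := sub_le_mul_abs_sub_right hF p p s
  rw [abs_sub_comm, abs_of_nonneg (sub_nonneg.mpr hps)] at this
  linarith [hmono₁ s hps]

theorem diag_le_add_mul {p s : ℝ} (hsp : s ≤ p) : F s s ≤ F p p + K * (p - s) := by
  have := sub_le_mul_abs_sub_right hF p s p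
  rw [abs_of_nonpos (sub_nonpos.mpr hsp), neg_sub] at this
  linarith [hmono₁ s hsp]

omit hF
include hmono₂

theorem le_diag_of_le_of_le {p q s : ℝ} (hps : p ≤ s) (hsq : s ≤ q) : F p q ≤ F s s :=
  (hmono₂ p hsq).trans (hmono₁ s hps)

theorem diag_le_of_le_of_le {p q s : ℝ} (hqs : q ≤ s) (hsp : s ≤ p) : F s s ≤ F p q :=
  (hmono₁ s hsp).trans (hmono₂ p hqs)

include hF

theorem sq_div_le_integral_diag_sub_of_le {p q : ℝ} (hpq : p ≤ q) :
    (F p p - F p q) ^ 2 / (2 * (K + 1)) ≤ ∫ s in p..q, (F s s - F p q) := by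
  have hK := lipschitz_const_nonneg hF
  have hjump := sub_le_mul_abs_sub_right hF p p q
  rw [abs_sub_comm, abs_of_nonneg (sub_nonneg.mpr hpq)] at hjump
  refine sq_div_le_integral_of_ramp_left_le hpq (by linarith) (sub_nonneg.mpr (hmono₂ p hpq))
    (by nlinarith) (((continuous_diag hF).sub continuous_const).intervalIntegrable _ _)
    (fun s hs => sub_nonneg.mpr (le_diag_of_le_of_le hmono₁ hmono₂ hs.1 hs.2))
    (fun s hs => ?_)
  nlinarith [sub_mul_le_diag hF hmono₁ hs.1, hs.1]

theorem sq_div_le_integral_sub_diag_of_le {p q : ℝ} (hqp : q ≤ p) :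
    (F p q - F p p) ^ 2 / (2 * (K + 1)) ≤ ∫ s in q..p, (F p q - F s s) := by
  have hK := lipschitz_const_nonneg hF
  have hjump := sub_le_mul_abs_sub_right hF p q p
  rw [abs_of_nonpos (sub_nonpos.mpr hqp), neg_sub] at hjump
  refine sq_div_le_integral_of_ramp_right_le hqp (by linarith) (sub_nonneg.mpr (hmono₂ p hqp))
    (by nlinarith) ((continuous_const.sub (continuous_diag hF)).intervalIntegrable _ _)
    (fun s hs => sub_nonneg.mpr (diag_le_of_le_of_le hmono₁ hmono₂ hs.1 hs.2))
    (fun s hs => ?_)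
  nlinarith [diag_le_add_mul hF hmono₁ hs.2, hs.2]

theorem sq_div_le_integral_diag_sub (p q : ℝ) :
    (F p p - F p q) ^ 2 / (2 * (K + 1)) ≤ ∫ s in p..q, (F s s - F p q) := by
  rcases le_total p q with hpq | hqp
  · exact sq_div_le_integral_diag_sub_of_le hF hmono₁ hmono₂ hpq
  · rw [integral_symm, ← integral_neg, ← neg_sq, neg_sub]
    simpa only [neg_sub] using sq_div_le_integral_sub_diag_of_le hF hmono₁ hmono₂ hqp

end NumericalFlux

theorem flux_viscosity_sq_bound_left_general (f : ℝ → ℝ) (F : ℝ → ℝ → ℝ) (LF : ℝ)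
    (hFlip : ∀ p q p' q', |F p q - F p' q'| ≤ LF * (|p - p'| + |q - q'|))
    (hcons : ∀ v, F v v = f v)
    (hmono₁ : ∀ w, Monotone (fun v => F v w))
    (hmono₂ : ∀ v, Antitone (fun w => F v w)) :
    ∃ C > 0, ∀ p q : ℝ,
      0 ≤ (∫ s in p..q, (f s - F p q)) ∧
      (f p - F p q) ^ 2 ≤ C * ∫ s in p..q, (f s - F p q) := by
  have hC : 0 < 2 * (LF + 1) := by linarith [NumericalFlux.lipschitz_const_nonneg hFlip]
  refine ⟨2 * (LF + 1), hC, fun p q => ?_⟩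
  have key := NumericalFlux.sq_div_le_integral_diag_sub hFlip hmono₁ hmono₂ p q
  simp only [hcons] at key
  exact ⟨(div_nonneg (sq_nonneg _) hC.le).trans key, (div_le_iff₀' hC).mp key⟩

/-- Estimate (4.6) of the paper: for a Lipschitz, monotone numerical flux `F`
consistent with a Lipschitz `f`, there is `C > 0` depending only on the Lipschitz
constant of `F` such that `(f p − F(p,q))² ≤ C ∫_p^q (f s − F(p,q)) ds`, the
signed integral on the right being nonnegative. -/
theorem flux_viscosity_sq_bound_left (f : ℝ → ℝ) (F : ℝ → ℝ → ℝ) (Lf LF : ℝ)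
    (hLf : 0 ≤ Lf) (hLF : 0 ≤ LF)
    (hflip : ∀ x y, |f x - f y| ≤ Lf * |x - y|)
    (hFlip : ∀ p q p' q', |F p q - F p' q'| ≤ LF * (|p - p'| + |q - q'|))
    (hcons : ∀ v, F v v = f v)
    (hmono₁ : ∀ w, Monotone (fun v => F v w))
    (hmono₂ : ∀ v, Antitone (fun w => F v w)) :
    ∃ C > 0, ∀ p q : ℝ,
      0 ≤ (∫ s in p..q, (f s - F p q)) ∧
      (f p - F p q) ^ 2 ≤ C * ∫ s in p..q, (f s - F p q) :=
  flux_viscosity_sq_bound_left_general f F LF hFlip hcons hmono₁ hmono₂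
end

section
/- Let f : ℝ → ℝ be Lipschitz and F : ℝ × ℝ → ℝ be a Lipschitz, monotone numerical flux consistent with f. Then there exists C > 0 such that for all p, q ∈ ℝ, (f(q) − F(p,q))² ≤ C ∫_p^q (f(s) − F(p,q)) ds. -/
/-!
For `p ≤ q`, monotonicity and consistency of the flux give `F p q ≤ F s q ≤ F s s = f s` on
`[p, q]`, so `ψ s = f s - F p q` is nonnegative there, Lipschitz, and `ψ q = F q q - F p q` is at
most `LF (q - p)`. A nonnegative `L`-Lipschitz function with value `M` at an endpoint lies above
the tent of slope `L` and height `M` at that endpoint; if the tent fits into the interval, the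
integral is at least its area `M² / (2L)`. For `q < p` the same applies to `F p q - f` on `[q, p]`
at the left endpoint.
-/

open intervalIntegral Set

section LipschitzIntegral

variable {ψ : ℝ → ℝ} {L u v : ℝ}

theorem continuous_of_abs_sub_le_mul (hψ : ∀ x y, |ψ x - ψ y| ≤ L * |x - y|) :
    Continuous ψ :=
  (LipschitzWith.of_dist_le' (K := L) fun x y => by
    simpa only [Real.dist_eq] using hψ x y).continuous

theorem sq_le_two_mul_integral_of_lipschitz_right (hL : 0 < L) (huv : u ≤ v)
    (hψ : ∀ x y, |ψ x - ψ y| ≤ L * |x - y|) (hnonneg : ∀ s ∈ Icc u v, 0 ≤ ψ s)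
    (hv : ψ v ≤ L * (v - u)) :
    ψ v ^ 2 ≤ 2 * L * ∫ s in u..v, ψ s := by
  set M := ψ v
  have hM : 0 ≤ M := hnonneg v ⟨huv, le_rfl⟩
  set c := v - M / L with hc
  have hcu : u ≤ c := by
    have : M / L ≤ v - u := (div_le_iff₀ hL).2 (by linarith)
    linarith
  have hcv : c ≤ v := by
    have := div_nonneg hM hL.le
    linarith
  have hcont := continuous_of_abs_sub_le_mul hψ
  have htent : ∫ s in c..v, (M - L * (v - s)) = M ^ 2 / (2 * L) := by
    have : ∫ s in c..v, (M - L * (v - s)) = ∫ t in (0 : ℝ)..v - c, (M - L * t) := by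
      simpa using integral_comp_sub_left (fun t => M - L * t) (a := c) (b := v) v
    rw [this, integral_sub intervalIntegrable_const (intervalIntegrable_id.const_mul L),
      integral_const, integral_const_mul, integral_id, smul_eq_mul, hc]
    field_simp
    ring
  have htent_le : ∫ s in c..v, (M - L * (v - s)) ≤ ∫ s in c..v, ψ s := by
    refine integral_mono_on hcv
      ((by fun_prop : Continuous fun s => M - L * (v - s)).intervalIntegrable _ _)
      (hcont.intervalIntegrable _ _) fun s hs => ?_
    have := (abs_le.1 (hψ v s)).2
    rw [abs_of_nonneg (sub_nonneg.2 hs.2)] at this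
    linarith
  have hleft : 0 ≤ ∫ s in u..c, ψ s :=
    integral_nonneg hcu fun s hs => hnonneg s ⟨hs.1, hs.2.trans hcv⟩
  rw [← integral_add_adjacent_intervals (hcont.intervalIntegrable u c)
    (hcont.intervalIntegrable c v)]
  calc M ^ 2 = 2 * L * ∫ s in c..v, (M - L * (v - s)) := by
        rw [htent]
        field_simp
    _ ≤ 2 * L * ((∫ s in u..c, ψ s) + ∫ s in c..v, ψ s) := by gcongr; linarith

theorem sq_le_two_mul_integral_of_lipschitz_left (hL : 0 < L) (huv : u ≤ v)
    (hψ : ∀ x y, |ψ x - ψ y| ≤ L * |x - y|) (hnonneg : ∀ s ∈ Icc u v, 0 ≤ ψ s)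
    (hu : ψ u ≤ L * (v - u)) :
    ψ u ^ 2 ≤ 2 * L * ∫ s in u..v, ψ s := by
  have := sq_le_two_mul_integral_of_lipschitz_right (ψ := fun s => ψ (u + v - s)) hL huv
    (fun x y => by simpa [abs_sub_comm] using hψ (u + v - x) (u + v - y))
    (fun s hs => hnonneg _ ⟨by linarith [hs.2], by linarith [hs.1]⟩) (by simpa using hu)
  simpa [integral_comp_sub_left] using this

end LipschitzIntegral

section MonotoneFlux

variable {f : ℝ → ℝ} {F : ℝ → ℝ → ℝ} {p q s : ℝ}

theorem flux_le_of_mem_Icc (hcons : ∀ v, F v v = f v) (hmono₁ : ∀ w, Monotone (fun v => F v w))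
    (hmono₂ : ∀ v, Antitone (fun w => F v w)) (hs : s ∈ Icc p q) :
    F p q ≤ f s :=
  hcons s ▸ (hmono₁ q hs.1).trans (hmono₂ s hs.2)

theorem le_flux_of_mem_Icc (hcons : ∀ v, F v v = f v) (hmono₁ : ∀ w, Monotone (fun v => F v w))
    (hmono₂ : ∀ v, Antitone (fun w => F v w)) (hs : s ∈ Icc q p) :
    f s ≤ F p q :=
  hcons s ▸ (hmono₂ s hs.1).trans (hmono₁ q hs.2)

theorem abs_sub_flux_le {LF : ℝ} (hcons : ∀ v, F v v = f v)
    (hFlip : ∀ p q p' q', |F p q - F p' q'| ≤ LF * (|p - p'| + |q - q'|)) :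
    |f q - F p q| ≤ LF * |p - q| := by
  simpa [hcons, abs_sub_comm q p] using hFlip q q p q

end MonotoneFlux

/-- Estimate (4.7) of the paper: for a Lipschitz, monotone numerical flux `F`
consistent with a Lipschitz `f`, there is `C > 0` such that
`(f q − F(p,q))² ≤ C ∫_p^q (f s − F(p,q)) ds`. -/
theorem flux_viscosity_sq_bound_right (f : ℝ → ℝ) (F : ℝ → ℝ → ℝ) (Lf LF : ℝ)
    (hLf : 0 ≤ Lf) (hLF : 0 ≤ LF)
    (hflip : ∀ x y, |f x - f y| ≤ Lf * |x - y|)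
    (hFlip : ∀ p q p' q', |F p q - F p' q'| ≤ LF * (|p - p'| + |q - q'|))
    (hcons : ∀ v, F v v = f v)
    (hmono₁ : ∀ w, Monotone (fun v => F v w))
    (hmono₂ : ∀ v, Antitone (fun w => F v w)) :
    ∃ C > 0, ∀ p q : ℝ,
      (f q - F p q) ^ 2 ≤ C * ∫ s in p..q, (f s - F p q) := by
  set L := Lf + LF + 1
  have hL : 0 < L := by positivity
  have hfL (x y : ℝ) : |f x - f y| ≤ L * |x - y| :=
    (hflip x y).trans (mul_le_mul_of_nonneg_right (by linarith) (abs_nonneg _))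
  refine ⟨2 * L, by positivity, fun p q => ?_⟩
  have hend := abs_le.1 <| (abs_sub_flux_le (p := p) (q := q) hcons hFlip).trans
    (mul_le_mul_of_nonneg_right (show LF ≤ L by linarith) (abs_nonneg (p - q)))
  rcases le_total p q with hpq | hqp
  · refine sq_le_two_mul_integral_of_lipschitz_right (ψ := fun s => f s - F p q) hL hpq
      (fun x y => by simpa using hfL x y)
      (fun s hs => sub_nonneg.2 (flux_le_of_mem_Icc hcons hmono₁ hmono₂ hs)) ?_
    rw [abs_of_nonpos (sub_nonpos.2 hpq)] at hend
    linarith [hend.2]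
  · have := sq_le_two_mul_integral_of_lipschitz_left (ψ := fun s => F p q - f s) hL hqp
      (fun x y => by simpa [abs_sub_comm] using hfL x y)
      (fun s hs => sub_nonneg.2 (le_flux_of_mem_Icc hcons hmono₁ hmono₂ hs)) ?_
    · rw [integral_symm, ← integral_neg]
      simpa [sub_sq_comm (f q)] using this
    rw [abs_of_nonneg (sub_nonneg.2 hqp)] at hend
    linarith [hend.1]
end

section
/- There exists a universal constant C > 0 such that for every h > 0 and every complex sequence φ = (φ_j)_{j∈ℤ} with ∑_j h|φ_j|² < ∞, one has sup_j |φ_j| ≤ C ‖φ‖₂^{1/2} ‖D₊φ‖₂^{1/2}, where ‖φ‖₂ = (∑_j h|φ_j|²)^{1/2} and ‖D₊φ‖₂ = (∑_j h|(φ_{j+1}−φ_j)/h|²)^{1/2}. -/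
/-!
Telescoping from `-∞`, where `‖φ k‖ → 0`, gives
`‖φ j‖² ≤ ∑ₖ (‖φ (k+1)‖² - ‖φ k‖²)⁺ ≤ ∑ₖ ‖φ (k+1) - φ k‖ (‖φ (k+1)‖ + ‖φ k‖)`,
and Cauchy–Schwarz bounds the right side by `2 ‖D₊φ‖ ‖φ‖` in unweighted `ℓ²` norms.
The mesh weights contribute `h` and `h⁻¹` to the two norms, which cancel in the product.
-/

open Filter Topology

theorem summable_mul_of_summable_sq {ι : Type*} {f g : ι → ℝ}
    (hf : Summable fun i => f i ^ 2) (hg : Summable fun i => g i ^ 2) :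
    Summable fun i => f i * g i :=
  .of_norm_bounded (hf.add hg) fun i => by
    rw [Real.norm_eq_abs, abs_mul]
    nlinarith [sq_nonneg (|f i| - |g i|), sq_abs (f i), sq_abs (g i)]

theorem tsum_mul_le_sqrt_mul_sqrt {ι : Type*} {f g : ι → ℝ}
    (hf : Summable fun i => f i ^ 2) (hg : Summable fun i => g i ^ 2) :
    ∑' i, f i * g i ≤ √(∑' i, f i ^ 2) * √(∑' i, g i ^ 2) :=
  (summable_mul_of_summable_sq hf hg).tsum_le_of_sum_le fun s =>
    (Real.sum_mul_le_sqrt_mul_sqrt s f g).trans <| by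
      gcongr
      · exact hf.sum_le_tsum s fun i _ => sq_nonneg _
      · exact hg.sum_le_tsum s fun i _ => sq_nonneg _

theorem summable_norm_sub_sq {ι E : Type*} [SeminormedAddCommGroup E] {φ ψ : ι → E}
    (hφ : Summable fun i => ‖φ i‖ ^ 2) (hψ : Summable fun i => ‖ψ i‖ ^ 2) :
    Summable fun i => ‖φ i - ψ i‖ ^ 2 :=
  .of_nonneg_of_le (fun _ => sq_nonneg _)
    (fun i => (pow_le_pow_left₀ (norm_nonneg _) (norm_sub_le (φ i) (ψ i)) 2).trans add_sq_le)
    ((hφ.add hψ).mul_left 2)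

theorem Summable.tendsto_atBot_zero {G : Type*} [AddCommGroup G] [TopologicalSpace G]
    [IsTopologicalAddGroup G] {f : ℤ → G} (hf : Summable f) : Tendsto f atBot (𝓝 0) :=
  hf.tendsto_cofinite_zero.mono_left (Int.cofinite_eq ▸ le_sup_left)

theorem sub_le_sum_Ico_of_sub_le {u g : ℤ → ℝ} (hstep : ∀ k, u (k + 1) - u k ≤ g k)
    {m j : ℤ} (hmj : m ≤ j) : u j - u m ≤ ∑ k ∈ Finset.Ico m j, g k := by
  induction m, hmj using Int.leInductionDown with
  | base => simp
  | pred m hmj ih =>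
    rw [← Finset.insert_Ico_left_eq_Ico_sub_one hmj, Finset.sum_insert (by simp)]
    have := hstep (m - 1)
    rw [sub_add_cancel] at this
    linarith

theorem le_tsum_of_sub_le_of_tendsto_atBot {u g : ℤ → ℝ} (hu : Tendsto u atBot (𝓝 0))
    (hg : Summable g) (hg0 : ∀ k, 0 ≤ g k) (hstep : ∀ k, u (k + 1) - u k ≤ g k) (j : ℤ) :
    u j ≤ ∑' k, g k := by
  have hlower : ∀ᶠ m in atBot, u j - ∑' k, g k ≤ u m := by
    filter_upwards [eventually_le_atBot j] with m hmj
    linarith [sub_le_sum_Ico_of_sub_le hstep hmj, hg.sum_le_tsum (Finset.Ico m j) fun k _ => hg0 k]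
  linarith [ge_of_tendsto hu hlower]

theorem norm_sq_le_two_mul_sqrt_mul_sqrt {E : Type*} [SeminormedAddCommGroup E] {φ : ℤ → E}
    (hφ : Summable fun k => ‖φ k‖ ^ 2) (j : ℤ) :
    ‖φ j‖ ^ 2 ≤ 2 * √(∑' k, ‖φ k‖ ^ 2) * √(∑' k, ‖φ (k + 1) - φ k‖ ^ 2) := by
  have hshift : Summable fun k => ‖φ (k + 1)‖ ^ 2 :=
    (Equiv.addRight (1 : ℤ)).summable_iff.mpr hφ
  have hshift_tsum : ∑' k, ‖φ (k + 1)‖ ^ 2 = ∑' k, ‖φ k‖ ^ 2 :=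
    (Equiv.addRight (1 : ℤ)).tsum_eq fun k => ‖φ k‖ ^ 2
  have hdiff := summable_norm_sub_sq hshift hφ
  have hfwd := summable_mul_of_summable_sq hdiff hshift
  have hbwd := summable_mul_of_summable_sq hdiff hφ
  have hstep : ∀ k, ‖φ (k + 1)‖ ^ 2 - ‖φ k‖ ^ 2 ≤
      ‖φ (k + 1) - φ k‖ * ‖φ (k + 1)‖ + ‖φ (k + 1) - φ k‖ * ‖φ k‖ := fun k => by
    nlinarith [norm_sub_norm_le (φ (k + 1)) (φ k), norm_nonneg (φ (k + 1)), norm_nonneg (φ k)]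
  calc ‖φ j‖ ^ 2
      ≤ ∑' k, (‖φ (k + 1) - φ k‖ * ‖φ (k + 1)‖ + ‖φ (k + 1) - φ k‖ * ‖φ k‖) :=
        le_tsum_of_sub_le_of_tendsto_atBot hφ.tendsto_atBot_zero (hfwd.add hbwd)
          (fun k => by positivity) hstep j
    _ = ∑' k, ‖φ (k + 1) - φ k‖ * ‖φ (k + 1)‖ + ∑' k, ‖φ (k + 1) - φ k‖ * ‖φ k‖ :=
        hfwd.tsum_add hbwd
    _ ≤ 2 * √(∑' k, ‖φ k‖ ^ 2) * √(∑' k, ‖φ (k + 1) - φ k‖ ^ 2) := by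
        have h₁ := tsum_mul_le_sqrt_mul_sqrt hdiff hshift
        have h₂ := tsum_mul_le_sqrt_mul_sqrt hdiff hφ
        rw [hshift_tsum] at h₁
        linarith

theorem Real.sqrt_sqrt_pow_four {x : ℝ} (hx : 0 ≤ x) : √(√x) ^ 4 = x := by
  rw [show 4 = 2 * 2 from rfl, pow_mul, Real.sq_sqrt (Real.sqrt_nonneg x), Real.sq_sqrt hx]

/-- Discrete Gagliardo–Nirenberg–Sobolev inequality:
`‖φ‖_∞ ≤ C ‖φ‖₂^{1/2} ‖D₊φ‖₂^{1/2}` with a universal constant `C`,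
for mesh-weighted ℓ² norms. -/
theorem discrete_GNS_sup :
    ∃ C > 0, ∀ h : ℝ, 0 < h → ∀ φ : ℤ → ℂ,
      Summable (fun j : ℤ => h * ‖φ j‖ ^ 2) →
      ∀ j : ℤ, ‖φ j‖ ≤
        C * Real.sqrt (Real.sqrt (∑' j : ℤ, h * ‖φ j‖ ^ 2)) *
          Real.sqrt (Real.sqrt (∑' j : ℤ, h * (‖φ (j + 1) - φ j‖ / h) ^ 2)) := by
  refine ⟨√2, by positivity, fun h hh φ hsum j => ?_⟩
  have hφ : Summable fun k => ‖φ k‖ ^ 2 := (summable_mul_left_iff hh.ne').mp hsum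
  have hD : ∑' k, h * (‖φ (k + 1) - φ k‖ / h) ^ 2 = h⁻¹ * ∑' k, ‖φ (k + 1) - φ k‖ ^ 2 := by
    rw [← tsum_mul_left]
    congr 1 with k
    field_simp
  set S := ∑' k, ‖φ k‖ ^ 2
  set D := ∑' k, ‖φ (k + 1) - φ k‖ ^ 2
  have hS0 : 0 ≤ S := tsum_nonneg fun k => sq_nonneg _
  have hD0 : 0 ≤ D := tsum_nonneg fun k => sq_nonneg _
  rw [tsum_mul_left, hD, ← pow_le_pow_iff_left₀ (norm_nonneg _) (by positivity) four_ne_zero,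
    mul_pow, mul_pow, Real.sqrt_sqrt_pow_four (by positivity),
    Real.sqrt_sqrt_pow_four (by positivity)]
  calc ‖φ j‖ ^ 4 = (‖φ j‖ ^ 2) ^ 2 := by ring
    _ ≤ (2 * √S * √D) ^ 2 := by gcongr; exact norm_sq_le_two_mul_sqrt_mul_sqrt hφ j
    _ = √2 ^ 4 * (h * S) * (h⁻¹ * D) := by
        rw [mul_pow, mul_pow, Real.sq_sqrt hS0, Real.sq_sqrt hD0,
          show √2 ^ 4 = (√2 ^ 2) ^ 2 by ring, Real.sq_sqrt zero_le_two]
        field_simp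
end

section
/- Let λ > 0 and suppose f : ℝ → ℝ is Lipschitz with λ·Lip(f) < 1. Define the Lax–Friedrichs numerical flux F(v₁,v₂) = ½(f(v₁)+f(v₂)) − (1/(2λ))(v₂−v₁). Then F is monotone (nondecreasing in v₁, nonincreasing in v₂), consistent with f (F(v,v) = f(v)), and moreover there exists k > 0 (one may take k = (1/(2λ))(1 − λ·Lip(f))) such that for all v₁ ≤ v₂, ∫_{v₁}^{v₂} (f(v) − F(v₁,v₂)) dv ≥ k (v₂ − v₁)². -/
/-- The Lax–Friedrichs flux `F(v₁,v₂) = ½(f(v₁)+f(v₂)) − (1/(2λ))(v₂−v₁)` under the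
CFL condition `λ·Lip(f) < 1` is monotone, consistent with `f`, and satisfies the
quadratic viscosity lower bound `∫_{v₁}^{v₂} (f(v) − F(v₁,v₂)) dv ≥ k (v₂−v₁)²`
for `v₁ ≤ v₂`, with `k = (1/(2λ))(1 − λ·Lip(f)) > 0`. -/
theorem laxFriedrichs_flux_properties (f : ℝ → ℝ) (lam L : ℝ)
    (hlam : 0 < lam) (hL : 0 ≤ L)
    (hlip : ∀ x y, |f x - f y| ≤ L * |x - y|)
    (hCFL : lam * L < 1)
    (F : ℝ → ℝ → ℝ)
    (hF : ∀ v₁ v₂, F v₁ v₂ = (f v₁ + f v₂) / 2 - (1 / (2 * lam)) * (v₂ - v₁)) :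
    (∀ w, Monotone (fun v => F v w)) ∧
    (∀ v, Antitone (fun w => F v w)) ∧
    (∀ v, F v v = f v) ∧
    ∃ k > 0, k = (1 / (2 * lam)) * (1 - lam * L) ∧
      ∀ v₁ v₂ : ℝ, v₁ ≤ v₂ →
        k * (v₂ - v₁) ^ 2 ≤ ∫ v in v₁..v₂, (f v - F v₁ v₂) := by
  have hcont : Continuous f := by
    have : LipschitzWith (Real.toNNReal L) f := by
      rw [lipschitzWith_iff_dist_le_mul]
      intro x y
      simpa [Real.dist_eq, Real.coe_toNNReal _ hL] using hlip x y
    exact this.continuous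
  have hlamL : L * lam < 1 := by linarith [mul_comm L lam, hCFL]
  refine ⟨?_, ?_, ?_, ?_⟩
  · intro w a b hab
    simp only [hF]
    have h1 : f a - f b ≤ L * (b - a) := by
      have := (abs_le.mp (hlip a b)).2
      rwa [abs_of_nonpos (by linarith : a - b ≤ 0), neg_sub] at this
    have h3 : L * (b - a) * lam ≤ (b - a) := by nlinarith
    have h2lam : (0:ℝ) < 2 * lam := by linarith
    rw [← sub_nonneg]
    have heq : (f b + f w) / 2 - 1 / (2 * lam) * (w - b) -
        ((f a + f w) / 2 - 1 / (2 * lam) * (w - a)) =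
        ((f b - f a) * lam + (b - a)) / (2 * lam) := by
      field_simp; ring
    rw [heq]
    apply div_nonneg _ (le_of_lt h2lam)
    nlinarith
  · intro v a b hab
    simp only [hF]
    have h1 : f b - f a ≤ L * (b - a) := by
      have := (abs_le.mp (hlip b a)).2
      rwa [abs_of_nonneg (by linarith : (0:ℝ) ≤ b - a)] at this
    have h3 : L * (b - a) * lam ≤ (b - a) := by nlinarith
    rw [← sub_nonneg]
    have h2lam : (0:ℝ) < 2 * lam := by linarith
    have heq : (f v + f a) / 2 - 1 / (2 * lam) * (a - v) -
        ((f v + f b) / 2 - 1 / (2 * lam) * (b - v)) =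
        ((b - a) - (f b - f a) * lam) / (2 * lam) := by
      field_simp; ring
    rw [heq]
    apply div_nonneg _ (le_of_lt h2lam)
    nlinarith
  · intro v; rw [hF]; ring
  · have hkpos : (0:ℝ) < (1 / (2 * lam)) * (1 - lam * L) := by
      have h1 : (0:ℝ) < 1 - lam * L := by linarith
      positivity
    refine ⟨(1 / (2 * lam)) * (1 - lam * L), hkpos, rfl, ?_⟩
    intro v₁ v₂ h12
    have hptwise : ∀ v ∈ Set.Icc v₁ v₂,
        (1 / (2 * lam)) * (1 - lam * L) * (v₂ - v₁) ≤ f v - F v₁ v₂ := by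
      intro v hv
      obtain ⟨hv1, hv2⟩ := hv
      have h1 : f v₁ - f v ≤ L * (v - v₁) := by
        have := (abs_le.mp (hlip v₁ v)).2
        rwa [abs_of_nonpos (by linarith : v₁ - v ≤ 0), neg_sub] at this
      have h2 : f v₂ - f v ≤ L * (v₂ - v) := by
        have := (abs_le.mp (hlip v₂ v)).2
        rwa [abs_of_nonneg (by linarith : (0:ℝ) ≤ v₂ - v)] at this
      have key : (f v₁ + f v₂) - 2 * f v ≤ L * (v₂ - v₁) := by linarith
      rw [hF, ← sub_nonneg]
      have h2lam : (0:ℝ) < 2 * lam := by linarith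
      have heq : f v - ((f v₁ + f v₂) / 2 - 1 / (2 * lam) * (v₂ - v₁)) -
          1 / (2 * lam) * (1 - lam * L) * (v₂ - v₁) =
          (L * (v₂ - v₁) - ((f v₁ + f v₂) - 2 * f v)) / 2 := by
        field_simp; ring
      rw [heq]
      apply div_nonneg _ (by norm_num)
      linarith
    have hInt : IntervalIntegrable (fun v => f v - F v₁ v₂) MeasureTheory.volume v₁ v₂ :=
      (hcont.sub continuous_const).intervalIntegrable v₁ v₂
    have hIntC : IntervalIntegrable
        (fun _ : ℝ => (1 / (2 * lam)) * (1 - lam * L) * (v₂ - v₁))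
        MeasureTheory.volume v₁ v₂ := intervalIntegrable_const
    have hmono := intervalIntegral.integral_mono_on h12 hIntC hInt hptwise
    rw [intervalIntegral.integral_const] at hmono
    calc (1 / (2 * lam)) * (1 - lam * L) * (v₂ - v₁) ^ 2
        = (v₂ - v₁) • ((1 / (2 * lam)) * (1 - lam * L) * (v₂ - v₁)) := by
          simp [smul_eq_mul]; ring
      _ ≤ _ := hmono
end

section
/- Let f : ℝ → ℝ be Lipschitz with constant L and λL < 1, and let F(v₁,v₂) = ½(f(v₁)+f(v₂)) − (1/(2λ))(v₂−v₁) be the Lax–Friedrichs flux. Then for all v₁ ≤ v ≤ v₂, (f(v) − F(v₁,v₂))/(v₂−v₁) ≥ k where k = (1/(2λ))(1 − λL) > 0 (whenever v₁ < v₂). -/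
/-!
Writing `f v - F(v₁, v₂)` as `½((f v - f v₁) + (f v - f v₂)) + (v₂ - v₁)/(2λ)`, the Lipschitz
bound costs at most `½ L ((v - v₁) + (v₂ - v)) = ½ L (v₂ - v₁)` on the two differences, leaving
`(v₂ - v₁)(1/(2λ) - L/2) = k (v₂ - v₁)`. The CFL condition is exactly `k > 0`.
-/

noncomputable def laxFriedrichsFlux (f : ℝ → ℝ) (lam v₁ v₂ : ℝ) : ℝ :=
  (f v₁ + f v₂) / 2 - (1 / (2 * lam)) * (v₂ - v₁)

lemma neg_mul_le_sub_add_sub_of_mem_Icc {f : ℝ → ℝ} {L : ℝ}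
    (hlip : ∀ x y, |f x - f y| ≤ L * |x - y|) {v₁ v v₂ : ℝ} (h₁ : v₁ ≤ v) (h₂ : v ≤ v₂) :
    -(L * (v₂ - v₁)) ≤ (f v - f v₁) + (f v - f v₂) := by
  have hleft := neg_le_of_abs_le (hlip v v₁)
  have hright := neg_le_of_abs_le (hlip v v₂)
  rw [abs_of_nonneg (sub_nonneg.mpr h₁)] at hleft
  rw [abs_of_nonpos (sub_nonpos.mpr h₂)] at hright
  linarith

lemma sub_laxFriedrichsFlux (f : ℝ → ℝ) (lam v₁ v v₂ : ℝ) :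
    f v - laxFriedrichsFlux f lam v₁ v₂ =
      ((f v - f v₁) + (f v - f v₂)) / 2 + (1 / (2 * lam)) * (v₂ - v₁) := by
  unfold laxFriedrichsFlux
  ring

lemma mul_sub_le_sub_laxFriedrichsFlux {f : ℝ → ℝ} {lam L : ℝ} (hlam : lam ≠ 0)
    (hlip : ∀ x y, |f x - f y| ≤ L * |x - y|) {v₁ v v₂ : ℝ} (h₁ : v₁ ≤ v) (h₂ : v ≤ v₂) :
    (1 / (2 * lam)) * (1 - lam * L) * (v₂ - v₁) ≤ f v - laxFriedrichsFlux f lam v₁ v₂ := by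
  have hk : (1 / (2 * lam)) * (1 - lam * L) = 1 / (2 * lam) - L / 2 := by
    field_simp
  rw [sub_laxFriedrichsFlux, hk]
  linarith [neg_mul_le_sub_add_sub_of_mem_Icc hlip h₁ h₂]

theorem laxFriedrichs_pointwise_viscosity_general (f : ℝ → ℝ) (lam L : ℝ)
    (hlam : 0 < lam)
    (hlip : ∀ x y, |f x - f y| ≤ L * |x - y|)
    (hCFL : lam * L < 1)
    (F : ℝ → ℝ → ℝ)
    (hF : ∀ v₁ v₂, F v₁ v₂ = (f v₁ + f v₂) / 2 - (1 / (2 * lam)) * (v₂ - v₁)) :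
    (0 < (1 / (2 * lam)) * (1 - lam * L)) ∧
    ∀ v₁ v v₂ : ℝ, v₁ ≤ v → v ≤ v₂ → v₁ < v₂ →
      (1 / (2 * lam)) * (1 - lam * L) ≤ (f v - F v₁ v₂) / (v₂ - v₁) := by
  obtain rfl : F = laxFriedrichsFlux f lam := funext₂ hF
  refine ⟨mul_pos (by positivity) (sub_pos.mpr hCFL), fun v₁ v v₂ h₁ h₂ h₁₂ => ?_⟩
  rw [le_div_iff₀ (sub_pos.mpr h₁₂)]
  exact mul_sub_le_sub_laxFriedrichsFlux hlam.ne' hlip h₁ h₂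

/-- Pointwise viscosity lower bound for the Lax–Friedrichs flux: under the CFL
condition `λL < 1`, for `v₁ ≤ v ≤ v₂` with `v₁ < v₂`,
`(f(v) − F(v₁,v₂))/(v₂−v₁) ≥ k` with `k = (1/(2λ))(1 − λL) > 0`. -/
theorem laxFriedrichs_pointwise_viscosity (f : ℝ → ℝ) (lam L : ℝ)
    (hlam : 0 < lam) (hL : 0 ≤ L)
    (hlip : ∀ x y, |f x - f y| ≤ L * |x - y|)
    (hCFL : lam * L < 1)
    (F : ℝ → ℝ → ℝ)
    (hF : ∀ v₁ v₂, F v₁ v₂ = (f v₁ + f v₂) / 2 - (1 / (2 * lam)) * (v₂ - v₁)) :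
    (0 < (1 / (2 * lam)) * (1 - lam * L)) ∧
    ∀ v₁ v v₂ : ℝ, v₁ ≤ v → v ≤ v₂ → v₁ < v₂ →
      (1 / (2 * lam)) * (1 - lam * L) ≤ (f v - F v₁ v₂) / (v₂ - v₁) :=
  laxFriedrichs_pointwise_viscosity_general f lam L hlam hlip hCFL F hF
end

section
/- Let β : [0,T] → ℝ be continuous, nonnegative with β ≥ 1, and suppose there is c > 0 such that for all t ∈ [0,T], β(t) ≤ c + c∫₀ᵗ β(s)^{1/2} ds + β(t)^{1/2}(c + c∫₀ᵗ β(s)^{1/2} ds). Suppose moreover β is nondecreasing. Then there exists a continuous function a : [0,∞) → [0,∞), depending only on c, such that β(t) ≤ a(t) for all t ∈ [0,T]. -/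
open Set Real intervalIntegral Topology

/-! Since `β ≥ 1`, the hypothesis `β ≤ A + √β · A` with `A = c + c ∫₀ᵗ √β` forces `√β ≤ 2A`,
a linear integral inequality for `√β`. The integral form of Grönwall's lemma then gives
`√β(t) ≤ 2c e^{2ct}`, and squaring bounds `β`. -/

theorem hasDerivWithinAt_integral_Ici_of_continuousOn {g : ℝ → ℝ} {a b x : ℝ}
    (hg : ContinuousOn g (Icc a b)) (hx : x ∈ Ico a b) :
    HasDerivWithinAt (fun t => ∫ s in a..t, g s) (g x) (Ici x) x := by
  have hIcc : Icc a b ∈ 𝓝[≥] x := Icc_mem_nhdsGE_of_mem hx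
  exact integral_hasDerivWithinAt_right
    (hg.mono (uIcc_subset_Icc ⟨le_rfl, hx.1.trans hx.2.le⟩ (Ico_subset_Icc_self hx))
      |>.intervalIntegrable)
    ((hg.stronglyMeasurableAtFilter_nhdsWithin measurableSet_Icc x).filter_mono
      ((nhdsWithin_mono x Ioi_subset_Ici_self).trans (nhdsWithin_le_of_mem hIcc)))
    (((hg x (Ico_subset_Icc_self hx)).mono_of_mem_nhdsWithin hIcc).mono Ioi_subset_Ici_self)

theorem le_mul_exp_of_le_add_mul_integral {g : ℝ → ℝ} {K C a b : ℝ}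
    (hg : ContinuousOn g (Icc a b)) (hC : 0 ≤ C)
    (h : ∀ t ∈ Icc a b, g t ≤ K + C * ∫ s in a..t, g s) :
    ∀ t ∈ Icc a b, g t ≤ K * exp (C * (t - a)) := by
  set u : ℝ → ℝ := fun t => K + C * ∫ s in a..t, g s
  have hu_cont : ContinuousOn u (Icc a b) := by
    rcases le_total a b with hab | hab
    · have := continuousOn_primitive_interval' (μ := MeasureTheory.volume)
        (hg.intervalIntegrable_of_Icc hab) left_mem_uIcc
      rw [uIcc_of_le hab] at this
      exact continuousOn_const.add (continuousOn_const.mul this)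
    · exact (subsingleton_Icc_of_ge hab).continuousOn u
  have hu_deriv : ∀ x ∈ Ico a b, HasDerivWithinAt u (C * g x) (Ici x) x := fun x hx =>
    ((hasDerivWithinAt_integral_Ici_of_continuousOn hg hx).const_mul C).const_add K
  intro t ht
  calc g t ≤ u t := h t ht
    _ ≤ gronwallBound K C 0 (t - a) :=
        le_gronwallBound_of_liminf_deriv_right_le hu_cont
          (fun x hx _ hr => (hu_deriv x hx).liminf_right_slope_le hr) (by simp [u])
          (fun x hx => by
            simpa using mul_le_mul_of_nonneg_left (h x (Ico_subset_Icc_self hx)) hC)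
          t ht
    _ = K * exp (C * (t - a)) := gronwallBound_ε0 K C _

theorem sqrt_le_two_mul_of_le_add_sqrt_mul {x A : ℝ} (hx : 1 ≤ x) (h : x ≤ A + √x * A) :
    √x ≤ 2 * A := by
  have hsqrt : 1 ≤ √x := one_le_sqrt.mpr hx
  have hsq : √x * √x = x := mul_self_sqrt (by linarith)
  nlinarith

/-- Nonlinear Gronwall-type lemma closing the energy estimate: if `β ≥ 1` is
continuous, nondecreasing and satisfies
`β(t) ≤ c + c∫₀ᵗ √β + √(β t) (c + c∫₀ᵗ √β)`, then `β` is bounded by a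
continuous function depending only on `c`. -/
theorem nonlinear_gronwall :
    ∀ c : ℝ, 0 < c → ∃ a : ℝ → ℝ, Continuous a ∧ (∀ t, 0 ≤ a t) ∧
      ∀ T : ℝ, 0 ≤ T → ∀ β : ℝ → ℝ,
        ContinuousOn β (Set.Icc 0 T) →
        (∀ t ∈ Set.Icc (0 : ℝ) T, 1 ≤ β t) →
        MonotoneOn β (Set.Icc 0 T) →
        (∀ t ∈ Set.Icc (0 : ℝ) T,
          β t ≤ c + c * (∫ s in (0 : ℝ)..t, Real.sqrt (β s)) +
            Real.sqrt (β t) * (c + c * ∫ s in (0 : ℝ)..t, Real.sqrt (β s))) →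
        ∀ t ∈ Set.Icc (0 : ℝ) T, β t ≤ a t := by
  intro c hc
  refine ⟨fun t => (2 * c * exp (2 * c * t)) ^ 2, by fun_prop, fun t => sq_nonneg _, ?_⟩
  intro T _ β hβ_cont hβ_one _ hβ t ht
  have hsqrt : ∀ s ∈ Icc 0 T, √(β s) ≤ 2 * c + 2 * c * ∫ r in 0..s, √(β r) := fun s hs => by
    have := sqrt_le_two_mul_of_le_add_sqrt_mul (A := c + c * ∫ r in 0..s, √(β r))
      (hβ_one s hs) (hβ s hs)
    linarith
  have hbound := le_mul_exp_of_le_add_mul_integral hβ_cont.sqrt (by positivity) hsqrt t ht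
  rw [sub_zero] at hbound
  exact (sqrt_le_left (by positivity)).mp hbound
end
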